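/- arXiv:2409.07174 — 4 statements merged into one kernel-verified Lean document; each statement's English description precedes it below -/
import Mathlib

section
/- Let α ∈ (0,1), let f : ℝ → ℝ, and let x : ℕ → ℝ be a sequence. Then x satisfies the Caputo-like fractional difference equation (1/Γ(1-α)) · Σ_{s=0}^{n} [Γ(n-s+1-α)/Γ(n-s+1)] · (x(s+1) - x(s)) = f(x(n)) - x(n) for all n ∈ ℕ if and only if x satisfies the summation representation x(t) = x(0) + (1/Γ(α)) · Σ_{j=1}^{t} [Γ(t-j+α)/Γ(t-j+1)] · (f(x(j-1)) - x(j-1)) for all t ∈ ℕ. -/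
open Finset Real

/-- Ascending factorial (Pochhammer) as a product. -/
private def P (a : ℝ) (k : ℕ) : ℝ := ∏ i ∈ Finset.range k, (a + i)

private lemma P_succ (a : ℝ) (k : ℕ) : P a (k + 1) = P a k * (a + k) := by
  simp [P, Finset.prod_range_succ]

private lemma P_one (m : ℕ) : P 1 m = (m.factorial : ℝ) := by
  induction m with
  | zero => simp [P]
  | succ m ih => rw [P_succ, ih, Nat.factorial_succ]; push_cast; ring

private lemma Gamma_nat_add (a : ℝ) (ha : 0 < a) (k : ℕ) :
    Real.Gamma ((k : ℝ) + a) = P a k * Real.Gamma a := by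
  induction k with
  | zero => simp [P]
  | succ k ih =>
    have hne : (k : ℝ) + a ≠ 0 := by positivity
    have h : ((k + 1 : ℕ) : ℝ) + a = ((k : ℝ) + a) + 1 := by push_cast; ring
    rw [h, Real.Gamma_add_one hne, ih, P_succ]
    ring

/-- Vandermonde identity for ascending factorials. -/
private lemma vand (a b : ℝ) (m : ℕ) :
    ∑ k ∈ Finset.range (m + 1), (m.choose k : ℝ) * (P a k * P b (m - k)) = P (a + b) m := by
  induction m with
  | zero => simp [P]
  | succ m ih =>
    set T : ℕ → ℝ := fun k => P a k * P b (m + 1 - k) with hT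
    have step1 : ∑ k ∈ Finset.range (m + 1 + 1), ((m + 1).choose k : ℝ) * T k
        = ∑ i ∈ Finset.range (m + 1), ((m.choose i : ℝ) * T (i + 1)
            + (m.choose (i + 1) : ℝ) * T (i + 1)) + ((m + 1).choose 0 : ℝ) * T 0 := by
      rw [Finset.sum_range_succ']
      congr 1
      apply Finset.sum_congr rfl
      intro i _
      rw [Nat.choose_succ_succ]
      push_cast
      ring
    have step2 : ∑ i ∈ Finset.range (m + 1), (m.choose (i + 1) : ℝ) * T (i + 1)
          + ((m + 1).choose 0 : ℝ) * T 0
        = ∑ k ∈ Finset.range (m + 1), (m.choose k : ℝ) * T k := by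
      have : ∑ k ∈ Finset.range (m + 1 + 1), (m.choose k : ℝ) * T k
          = ∑ i ∈ Finset.range (m + 1), (m.choose (i + 1) : ℝ) * T (i + 1)
            + (m.choose 0 : ℝ) * T 0 := Finset.sum_range_succ' _ _
      rw [show ((m + 1).choose 0 : ℝ) = (m.choose 0 : ℝ) by norm_num, ← this,
        Finset.sum_range_succ, Nat.choose_succ_self]
      simp
    rw [step1, Finset.sum_add_distrib, add_assoc, step2, ← Finset.sum_add_distrib]
    have step3 : ∀ k ∈ Finset.range (m + 1),
        (m.choose k : ℝ) * T (k + 1) + (m.choose k : ℝ) * T k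
          = ((a + b) + m) * ((m.choose k : ℝ) * (P a k * P b (m - k))) := by
      intro k hk
      have hkm : k ≤ m := Nat.lt_succ_iff.mp (Finset.mem_range.mp hk)
      have h1 : T (k + 1) = (P a k * (a + k)) * P b (m - k) := by
        rw [hT]; simp only
        rw [show m + 1 - (k + 1) = m - k by omega, P_succ]
      have h2 : T k = P a k * (P b (m - k) * (b + ((m - k : ℕ) : ℝ))) := by
        rw [hT]; simp only
        rw [show m + 1 - k = (m - k) + 1 by omega, P_succ]
      have h3 : ((m - k : ℕ) : ℝ) = (m : ℝ) - k := by
        rw [Nat.cast_sub hkm]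
      rw [h1, h2, h3]
      ring
    rw [Finset.sum_congr rfl step3, ← Finset.mul_sum, ih, P_succ]
    ring

/-- The key convolution identity. -/
private lemma key (a b : ℝ) (ha : 0 < a) (hb : 0 < b) (hab : a + b = 1) (m : ℕ) :
    ∑ k ∈ Finset.range (m + 1),
        Real.Gamma (((m - k : ℕ) : ℝ) + a) / Real.Gamma (((m - k : ℕ) : ℝ) + 1)
          * (Real.Gamma ((k : ℝ) + b) / Real.Gamma ((k : ℝ) + 1))
      = Real.Gamma a * Real.Gamma b := by
  have hfac : ∀ j : ℕ, Real.Gamma ((j : ℝ) + 1) = (j.factorial : ℝ) :=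
    fun j => Real.Gamma_nat_eq_factorial j
  have hterm : ∀ k ∈ Finset.range (m + 1),
      Real.Gamma (((m - k : ℕ) : ℝ) + a) / Real.Gamma (((m - k : ℕ) : ℝ) + 1)
          * (Real.Gamma ((k : ℝ) + b) / Real.Gamma ((k : ℝ) + 1))
        = Real.Gamma a * Real.Gamma b * (m.factorial : ℝ)⁻¹
            * ((m.choose k : ℝ) * (P b k * P a (m - k))) := by
    intro k hk
    have hkm : k ≤ m := Nat.lt_succ_iff.mp (Finset.mem_range.mp hk)
    rw [Gamma_nat_add a ha, Gamma_nat_add b hb, hfac, hfac]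
    have hchoose : (m.choose k : ℝ) * (k.factorial : ℝ) * ((m - k).factorial : ℝ)
        = (m.factorial : ℝ) := by
      exact_mod_cast congrArg Nat.cast (Nat.choose_mul_factorial_mul_factorial hkm)
    have hf1 : ((m - k).factorial : ℝ) ≠ 0 := Nat.cast_ne_zero.mpr (Nat.factorial_ne_zero _)
    have hf2 : ((k).factorial : ℝ) ≠ 0 := Nat.cast_ne_zero.mpr (Nat.factorial_ne_zero _)
    have hf3 : ((m).factorial : ℝ) ≠ 0 := Nat.cast_ne_zero.mpr (Nat.factorial_ne_zero _)
    field_simp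
    rw [← hchoose]
    ring
  rw [Finset.sum_congr rfl hterm, ← Finset.mul_sum]
  have : ∑ k ∈ Finset.range (m + 1), (m.choose k : ℝ) * (P b k * P a (m - k))
      = (m.factorial : ℝ) := by
    rw [vand b a m, show b + a = 1 by linarith, P_one]
  rw [this]
  have hf3 : ((m).factorial : ℝ) ≠ 0 := Nat.cast_ne_zero.mpr (Nat.factorial_ne_zero _)
  field_simp

/-- Double sum reindexing. -/
private lemma swap_sum (t : ℕ) (f : ℕ → ℕ → ℝ) :
    ∑ n ∈ Finset.range t, ∑ s ∈ Finset.range (n + 1), f n s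
      = ∑ s ∈ Finset.range t, ∑ k ∈ Finset.range (t - s), f (s + k) s := by
  induction t with
  | zero => simp
  | succ t ih =>
    rw [Finset.sum_range_succ, ih,
      Finset.sum_range_succ (fun s => ∑ k ∈ Finset.range (t + 1 - s), f (s + k) s) t]
    rw [show t + 1 - t = 1 by omega, Finset.sum_range_one, Nat.add_zero]
    have hs : ∀ s ∈ Finset.range t,
        ∑ k ∈ Finset.range (t + 1 - s), f (s + k) s
          = ∑ k ∈ Finset.range (t - s), f (s + k) s + f t s := by
      intro s hs
      have := Finset.mem_range.mp hs
      rw [show t + 1 - s = (t - s) + 1 by omega, Finset.sum_range_succ,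
        show s + (t - s) = t by omega]
    rw [Finset.sum_congr rfl hs, Finset.sum_add_distrib,
      Finset.sum_range_succ (fun s => f t s) t, Nat.add_zero]
    ring

/-- Convolution lemma. -/
private lemma convLem (a b : ℝ) (ha : 0 < a) (hb : 0 < b) (hab : a + b = 1)
    (t : ℕ) (v : ℕ → ℝ) :
    ∑ n ∈ Finset.range t,
        Real.Gamma (((t - 1 - n : ℕ) : ℝ) + a) / Real.Gamma (((t - 1 - n : ℕ) : ℝ) + 1)
          * ∑ s ∈ Finset.range (n + 1),
              Real.Gamma (((n - s : ℕ) : ℝ) + b) / Real.Gamma (((n - s : ℕ) : ℝ) + 1) * v s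
      = Real.Gamma a * Real.Gamma b * ∑ s ∈ Finset.range t, v s := by
  have h1 : ∑ n ∈ Finset.range t,
        Real.Gamma (((t - 1 - n : ℕ) : ℝ) + a) / Real.Gamma (((t - 1 - n : ℕ) : ℝ) + 1)
          * ∑ s ∈ Finset.range (n + 1),
              Real.Gamma (((n - s : ℕ) : ℝ) + b) / Real.Gamma (((n - s : ℕ) : ℝ) + 1) * v s
      = ∑ n ∈ Finset.range t, ∑ s ∈ Finset.range (n + 1),
          Real.Gamma (((t - 1 - n : ℕ) : ℝ) + a) / Real.Gamma (((t - 1 - n : ℕ) : ℝ) + 1)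
            * (Real.Gamma (((n - s : ℕ) : ℝ) + b) / Real.Gamma (((n - s : ℕ) : ℝ) + 1)) * v s := by
    apply Finset.sum_congr rfl
    intro n _
    rw [Finset.mul_sum]
    apply Finset.sum_congr rfl
    intro s _
    ring
  rw [h1, swap_sum]
  rw [Finset.mul_sum]
  apply Finset.sum_congr rfl
  intro s hs
  have hst : s < t := Finset.mem_range.mp hs
  have hrange : t - s = (t - 1 - s) + 1 := by omega
  rw [hrange, ← Finset.sum_mul]
  congr 1
  set m := t - 1 - s with hm
  have h2 : ∀ k ∈ Finset.range (m + 1),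
      Real.Gamma (((t - 1 - (s + k) : ℕ) : ℝ) + a) / Real.Gamma (((t - 1 - (s + k) : ℕ) : ℝ) + 1)
        * (Real.Gamma (((s + k - s : ℕ) : ℝ) + b) / Real.Gamma (((s + k - s : ℕ) : ℝ) + 1))
      = Real.Gamma (((m - k : ℕ) : ℝ) + a) / Real.Gamma (((m - k : ℕ) : ℝ) + 1)
        * (Real.Gamma ((k : ℝ) + b) / Real.Gamma ((k : ℝ) + 1)) := by
    intro k hk
    have hkm : k ≤ m := Nat.lt_succ_iff.mp (Finset.mem_range.mp hk)
    rw [show t - 1 - (s + k) = m - k by omega, show s + k - s = k by omega]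
  rw [Finset.sum_congr rfl h2, key a b ha hb hab m]

/-- For `0 < α < 1`, a sequence `x : ℕ → ℝ` satisfies the Caputo-like fractional
difference equation
`(1/Γ(1-α)) Σ_{s=0}^n [Γ(n-s+1-α)/Γ(n-s+1)] (x(s+1) - x(s)) = f(x(n)) - x(n)` for all `n`
iff it satisfies the summation representation
`x(t) = x(0) + (1/Γ(α)) Σ_{j=1}^t [Γ(t-j+α)/Γ(t-j+1)] (f(x(j-1)) - x(j-1))` for all `t`. -/
theorem stmt_2 (α : ℝ) (hα0 : 0 < α) (hα1 : α < 1) (f : ℝ → ℝ) (x : ℕ → ℝ) :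
    (∀ n : ℕ, (1 / Real.Gamma (1 - α)) *
        ∑ s ∈ Finset.range (n + 1),
          Real.Gamma (((n - s : ℕ) : ℝ) + 1 - α) / Real.Gamma (((n - s : ℕ) : ℝ) + 1) *
            (x (s + 1) - x s) = f (x n) - x n) ↔
    (∀ t : ℕ, x t = x 0 + (1 / Real.Gamma α) *
        ∑ j ∈ Finset.Icc 1 t,
          Real.Gamma (((t - j : ℕ) : ℝ) + α) / Real.Gamma (((t - j : ℕ) : ℝ) + 1) *
            (f (x (j - 1)) - x (j - 1))) := by
  have hb : 0 < 1 - α := by linarith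
  have hΓα : Real.Gamma α ≠ 0 := (Real.Gamma_pos_of_pos hα0).ne'
  have hΓb : Real.Gamma (1 - α) ≠ 0 := (Real.Gamma_pos_of_pos hb).ne'
  set u : ℕ → ℝ := fun n => f (x n) - x n with hu
  set B : ℕ → ℝ := fun k => Real.Gamma ((k : ℝ) + α) / Real.Gamma ((k : ℝ) + 1) with hB
  set C : ℕ → ℝ := fun k => Real.Gamma ((k : ℝ) + (1 - α)) / Real.Gamma ((k : ℝ) + 1) with hC
  -- rewrite E and R in terms of B, C, u
  have hEeq : ∀ n : ℕ, ((1 / Real.Gamma (1 - α)) *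
        ∑ s ∈ Finset.range (n + 1),
          Real.Gamma (((n - s : ℕ) : ℝ) + 1 - α) / Real.Gamma (((n - s : ℕ) : ℝ) + 1) *
            (x (s + 1) - x s) = f (x n) - x n)
      ↔ (∑ s ∈ Finset.range (n + 1), C (n - s) * (x (s + 1) - x s)
          = Real.Gamma (1 - α) * u n) := by
    intro n
    have h : ∑ s ∈ Finset.range (n + 1),
          Real.Gamma (((n - s : ℕ) : ℝ) + 1 - α) / Real.Gamma (((n - s : ℕ) : ℝ) + 1) *
            (x (s + 1) - x s)
        = ∑ s ∈ Finset.range (n + 1), C (n - s) * (x (s + 1) - x s) := by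
      apply Finset.sum_congr rfl
      intro s _
      rw [hC]
      simp only
      rw [add_sub_assoc]
    rw [h]
    constructor
    · intro h'
      rw [hu]
      simp only
      rw [← h']
      field_simp
    · intro h'
      rw [h', hu]
      field_simp
  have hReq : ∀ t : ℕ, (x t = x 0 + (1 / Real.Gamma α) *
        ∑ j ∈ Finset.Icc 1 t,
          Real.Gamma (((t - j : ℕ) : ℝ) + α) / Real.Gamma (((t - j : ℕ) : ℝ) + 1) *
            (f (x (j - 1)) - x (j - 1)))
      ↔ (x t = x 0 + (Real.Gamma α)⁻¹ * ∑ i ∈ Finset.range t, B (t - 1 - i) * u i) := by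
    intro t
    have h : ∑ j ∈ Finset.Icc 1 t,
          Real.Gamma (((t - j : ℕ) : ℝ) + α) / Real.Gamma (((t - j : ℕ) : ℝ) + 1) *
            (f (x (j - 1)) - x (j - 1))
        = ∑ i ∈ Finset.range t, B (t - 1 - i) * u i := by
      rw [show Finset.Icc 1 t = Finset.Ico 1 (t + 1) by rfl, Finset.sum_Ico_eq_sum_range]
      rw [show t + 1 - 1 = t by omega]
      apply Finset.sum_congr rfl
      intro i _
      rw [hB, hu]
      simp only
      rw [show t - (1 + i) = t - 1 - i by omega, show 1 + i - 1 = i by omega]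
    rw [h, one_div]
  constructor
  · -- E → R
    intro hE t
    rw [hReq t]
    have hE' : ∀ n, ∑ s ∈ Finset.range (n + 1), C (n - s) * (x (s + 1) - x s)
        = Real.Gamma (1 - α) * u n := fun n => (hEeq n).mp (hE n)
    have h1 : ∑ i ∈ Finset.range t, B (t - 1 - i) * u i
        = (Real.Gamma (1 - α))⁻¹ * ∑ i ∈ Finset.range t,
            B (t - 1 - i) * ∑ s ∈ Finset.range (i + 1), C (i - s) * (x (s + 1) - x s) := by
      rw [Finset.mul_sum]
      apply Finset.sum_congr rfl
      intro i _
      rw [hE' i]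
      field_simp
    have h2 : ∑ i ∈ Finset.range t,
          B (t - 1 - i) * ∑ s ∈ Finset.range (i + 1), C (i - s) * (x (s + 1) - x s)
        = Real.Gamma α * Real.Gamma (1 - α) * ∑ s ∈ Finset.range t, (x (s + 1) - x s) :=
      convLem α (1 - α) hα0 hb (by ring) t (fun s => x (s + 1) - x s)
    rw [h1, h2, Finset.sum_range_sub (fun s => x s)]
    field_simp
    ring
  · -- R → E
    intro hR n
    rw [hEeq n]
    have hR' : ∀ t, x t = x 0 + (Real.Gamma α)⁻¹ * ∑ i ∈ Finset.range t, B (t - 1 - i) * u i :=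
      fun t => (hReq t).mp (hR t)
    set S : ℕ → ℝ := fun t => ∑ i ∈ Finset.range t, B (t - 1 - i) * u i with hS
    have hd : ∀ s : ℕ, x (s + 1) - x s = (Real.Gamma α)⁻¹ * (S (s + 1) - S s) := by
      intro s
      rw [hR' (s + 1), hR' s]
      ring
    have hTa : ∀ m : ℕ, ∑ s ∈ Finset.range m, C (m - 1 - s) * S (s + 1)
        = Real.Gamma (1 - α) * Real.Gamma α * ∑ i ∈ Finset.range m, u i := by
      intro m
      have hc := convLem (1 - α) α hb hα0 (by ring) m u
      rw [← hc]
      apply Finset.sum_congr rfl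
      intro s _
      rw [hS, hB, hC]
      simp only [Nat.add_sub_cancel]
    have hsum1 : ∑ s ∈ Finset.range (n + 1), C (n - s) * S (s + 1)
        = Real.Gamma (1 - α) * Real.Gamma α * ∑ i ∈ Finset.range (n + 1), u i := by
      rw [← hTa (n + 1)]
      apply Finset.sum_congr rfl
      intro s _
      rw [show n + 1 - 1 - s = n - s by omega]
    have hsum2 : ∑ s ∈ Finset.range (n + 1), C (n - s) * S s
        = Real.Gamma (1 - α) * Real.Gamma α * ∑ i ∈ Finset.range n, u i := by
      rw [Finset.sum_range_succ']
      have hS0 : S 0 = 0 := by simp [hS]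
      rw [hS0]
      simp only [mul_zero, add_zero]
      rw [← hTa n]
      apply Finset.sum_congr rfl
      intro i _
      rw [show n - (i + 1) = n - 1 - i by omega]
    have hsplit : ∑ s ∈ Finset.range (n + 1), C (n - s) * (x (s + 1) - x s)
        = (Real.Gamma α)⁻¹ * (∑ s ∈ Finset.range (n + 1), C (n - s) * S (s + 1)
            - ∑ s ∈ Finset.range (n + 1), C (n - s) * S s) := by
      rw [← Finset.sum_sub_distrib, Finset.mul_sum]
      apply Finset.sum_congr rfl
      intro s _
      rw [hd s]
      ring
    rw [hsplit, hsum1, hsum2, Finset.sum_range_succ]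
    field_simp
    ring
end

section
/- Let μ > 0 and r ≠ 0 with 4r + μ − 2rμ + r²μ ≥ 0, set s = √(4r + μ − 2rμ + r²μ) and x₂* = (μ + rμ − √μ·s)/(2rμ), and suppose (r−1)√μ + s ≠ 0. Then f(x) = μx(1-x)/(1 + rμx(1-x)) is differentiable at x₂* with f'(x₂*) = 4r(−√μ + s)/( √μ·((r−1)√μ + s)² ). -/
/-- For `μ > 0`, `r ≠ 0` with `4r + μ − 2rμ + r²μ ≥ 0`,
`s = √(4r + μ − 2rμ + r²μ)`, `x₂* = (μ + rμ − √μ·s)/(2rμ)` and `(r−1)√μ + s ≠ 0`, the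
generalized logistic map `f(x) = μx(1-x)/(1 + rμx(1-x))` is differentiable at `x₂*` with
`f'(x₂*) = 4r(−√μ + s)/(√μ·((r−1)√μ + s)²)`. -/
theorem stmt_11 (μ r : ℝ) (hμ : 0 < μ) (hr : r ≠ 0)
    (hD : 0 ≤ 4 * r + μ - 2 * r * μ + r ^ 2 * μ)
    (s : ℝ) (hs : s = Real.sqrt (4 * r + μ - 2 * r * μ + r ^ 2 * μ))
    (x₂ : ℝ) (hx₂ : x₂ = (μ + r * μ - Real.sqrt μ * s) / (2 * r * μ))
    (hne : (r - 1) * Real.sqrt μ + s ≠ 0) :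
    HasDerivAt (fun z : ℝ => μ * z * (1 - z) / (1 + r * μ * z * (1 - z)))
      (4 * r * (-Real.sqrt μ + s) / (Real.sqrt μ * ((r - 1) * Real.sqrt μ + s) ^ 2)) x₂ := by
  have ha : 0 < Real.sqrt μ := Real.sqrt_pos.mpr hμ
  have ha2 : Real.sqrt μ ^ 2 = μ := Real.sq_sqrt hμ.le
  have hs2 : s ^ 2 = 4 * r + μ - 2 * r * μ + r ^ 2 * μ := by
    rw [hs]; exact Real.sq_sqrt hD
  set a := Real.sqrt μ with ha_def
  clear_value a
  clear hs ha_def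
  subst ha2
  have hane : a ≠ 0 := ha.ne'
  have hx_eq : 1 - 2 * x₂ = (s - a) / (r * a) := by
    rw [hx₂]; field_simp; ring
  have hv_eq : 1 + r * a ^ 2 * x₂ * (1 - x₂) = a * ((r - 1) * a + s) / (2 * r) := by
    rw [hx₂]; field_simp
    linear_combination (-1) * hs2
  have hv0 : 1 + r * a ^ 2 * x₂ * (1 - x₂) ≠ 0 := by
    rw [hv_eq]
    exact div_ne_zero (mul_ne_zero hane hne) (mul_ne_zero two_ne_zero hr)
  have hu : HasDerivAt (fun z : ℝ => a ^ 2 * z * (1 - z)) (a ^ 2 * (1 - 2 * x₂)) x₂ := by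
    have h1 : HasDerivAt (fun z : ℝ => a ^ 2 * z * (1 - z))
        (a ^ 2 * 1 * (1 - x₂) + a ^ 2 * x₂ * (0 - 1)) x₂ :=
      ((hasDerivAt_id x₂).const_mul (a ^ 2)).mul ((hasDerivAt_const x₂ 1).sub (hasDerivAt_id x₂))
    convert h1 using 1; ring
  have hv : HasDerivAt (fun z : ℝ => 1 + r * a ^ 2 * z * (1 - z)) (r * a ^ 2 * (1 - 2 * x₂)) x₂ := by
    have h1 : HasDerivAt (fun z : ℝ => 1 + r * a ^ 2 * z * (1 - z))
        (r * a ^ 2 * 1 * (1 - x₂) + r * a ^ 2 * x₂ * (0 - 1)) x₂ :=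
      (((hasDerivAt_id x₂).const_mul (r * a ^ 2)).mul
        ((hasDerivAt_const x₂ 1).sub (hasDerivAt_id x₂))).const_add 1
    convert h1 using 1; ring
  have hd := hu.div hv hv0
  refine hd.congr_deriv ?_
  have hnum : a ^ 2 * (1 - 2 * x₂) * (1 + r * a ^ 2 * x₂ * (1 - x₂)) -
      a ^ 2 * x₂ * (1 - x₂) * (r * a ^ 2 * (1 - 2 * x₂)) = a ^ 2 * (1 - 2 * x₂) := by ring
  rw [hnum, hx_eq, hv_eq]
  field_simp
  ring
end

section
/- Let μ > 0 and r ≠ 0 with 4r + μ − 2rμ + r²μ ≥ 0, set s = √(4r + μ − 2rμ + r²μ) and x₃* = (μ + rμ + √μ·s)/(2rμ), and suppose (1−r)√μ + s ≠ 0. Then f(x) = μx(1-x)/(1 + rμx(1-x)) is differentiable at x₃* with f'(x₃*) = −4r(√μ + s)/( √μ·((1−r)√μ + s)² ). -/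
/-- For `μ > 0`, `r ≠ 0` with `4r + μ − 2rμ + r²μ ≥ 0`,
`s = √(4r + μ − 2rμ + r²μ)`, `x₃* = (μ + rμ + √μ·s)/(2rμ)` and `(1−r)√μ + s ≠ 0`, the
generalized logistic map `f(x) = μx(1-x)/(1 + rμx(1-x))` is differentiable at `x₃*` with
`f'(x₃*) = −4r(√μ + s)/(√μ·((1−r)√μ + s)²)`. -/
theorem stmt_12 (μ r : ℝ) (hμ : 0 < μ) (hr : r ≠ 0)
    (hD : 0 ≤ 4 * r + μ - 2 * r * μ + r ^ 2 * μ)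
    (s : ℝ) (hs : s = Real.sqrt (4 * r + μ - 2 * r * μ + r ^ 2 * μ))
    (x₃ : ℝ) (hx₃ : x₃ = (μ + r * μ + Real.sqrt μ * s) / (2 * r * μ))
    (hne : (1 - r) * Real.sqrt μ + s ≠ 0) :
    HasDerivAt (fun z : ℝ => μ * z * (1 - z) / (1 + r * μ * z * (1 - z)))
      (-(4 * r * (Real.sqrt μ + s)) / (Real.sqrt μ * ((1 - r) * Real.sqrt μ + s) ^ 2)) x₃ := by
  set a := Real.sqrt μ with ha_def
  have ha : 0 < a := Real.sqrt_pos.mpr hμ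
  have ha2 : a ^ 2 = μ := Real.sq_sqrt hμ.le
  have hs2 : s ^ 2 = 4 * r + μ - 2 * r * μ + r ^ 2 * μ := by rw [hs]; exact Real.sq_sqrt hD
  have hμ' : μ ≠ 0 := hμ.ne'
  have hden : 1 + r * μ * x₃ * (1 - x₃) = -(a * ((1 - r) * a + s)) / (2 * r) := by
    subst hx₃
    field_simp
    linear_combination (-s^2 + 2*μ*(1-r)) * ha2 + (-μ) * hs2
  have hden_ne : 1 + r * μ * x₃ * (1 - x₃) ≠ 0 := by
    rw [hden]
    exact div_ne_zero (neg_ne_zero.mpr (mul_ne_zero ha.ne' hne)) (by simpa using hr)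
  have hg : HasDerivAt (fun z : ℝ => μ * z * (1 - z)) (μ * (1 - 2 * x₃)) x₃ := by
    have h := ((hasDerivAt_id x₃).const_mul μ).mul
      ((hasDerivAt_const x₃ (1:ℝ)).sub (hasDerivAt_id x₃))
    convert h using 1
    · rfl
    · rfl
    · rfl
    all_goals simp [mul_comm] <;> ring
  have hh : HasDerivAt (fun z : ℝ => 1 + r * μ * z * (1 - z)) (r * μ * (1 - 2 * x₃)) x₃ := by
    have h := (hasDerivAt_const x₃ (1:ℝ)).add
      (((hasDerivAt_id x₃).const_mul (r * μ)).mul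
        ((hasDerivAt_const x₃ (1:ℝ)).sub (hasDerivAt_id x₃)))
    convert h using 1
    · rfl
    · rfl
    · rfl
    simp only [id_eq, Pi.sub_apply]
    ring
  have key := hg.div hh hden_ne
  have h1 : μ * (1 - 2 * x₃) = -(a * (a + s)) / r := by
    subst hx₃
    field_simp
    linear_combination ha2
  have enum : μ * (1 - 2 * x₃) * (1 + r * μ * x₃ * (1 - x₃)) -
      μ * x₃ * (1 - x₃) * (r * μ * (1 - 2 * x₃)) = μ * (1 - 2 * x₃) := by ring
  convert key using 1
  · rfl
  · rfl
  · rfl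
  rw [enum, h1, hden, div_pow]
  have hT : (-(a * ((1 - r) * a + s))) ^ 2 / (2 * r) ^ 2 ≠ 0 :=
    div_ne_zero (pow_ne_zero 2 (neg_ne_zero.mpr (mul_ne_zero ha.ne' hne)))
      (pow_ne_zero 2 (by simpa using hr))
  rw [div_eq_div_iff (mul_ne_zero ha.ne' (pow_ne_zero 2 hne)) hT]
  field_simp
  ring
end

section
/- Let α ∈ (0,1], μ, r, k ∈ ℝ, let f(x) = μx(1-x)/(1 + rμx(1-x)), and let H₁(x,y) = (μ(x−y) − μ(x²−y²))/((1 + rμx(1-x))(1 + rμy(1-y))) + k(x−y). Suppose x : ℕ → ℝ satisfies x(t) = x(0) + (1/Γ(α)) · Σ_{j=1}^{t} [Γ(t-j+α)/Γ(t-j+1)] · (f(x(j-1)) − x(j-1)), y : ℕ → ℝ satisfies y(t) = y(0) + (1/Γ(α)) · Σ_{j=1}^{t} [Γ(t-j+α)/Γ(t-j+1)] · (f(y(j-1)) − y(j-1) + H₁(x(j-1), y(j-1))), and 1 + rμx(t)(1−x(t)) ≠ 0 and 1 + rμy(t)(1−y(t)) ≠ 0 for all t ∈ ℕ. Then the error E(t)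 = x(t) − y(t) satisfies the exact linear fractional recursion E(t) = E(0) + (1/Γ(α)) · Σ_{j=1}^{t} [Γ(t-j+α)/Γ(t-j+1)] · (−(1+k)·E(j-1)) for all t ∈ ℕ. -/
/-- Under the synchronization controller `H₁` with gain `p = μ`, the error
`E(t) = x(t) − y(t)` between the master fractional-order generalized logistic map and the
controlled slave system satisfies the exact linear fractional recursion
`E(t) = E(0) + (1/Γ(α)) Σ_{j=1}^t [Γ(t-j+α)/Γ(t-j+1)] (−(1+k) E(j-1))`. -/
theorem stmt_18 (α μ r k : ℝ) (hα0 : 0 < α) (hα1 : α ≤ 1)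
    (f : ℝ → ℝ) (hf : ∀ z, f z = μ * z * (1 - z) / (1 + r * μ * z * (1 - z)))
    (H : ℝ → ℝ → ℝ)
    (hH : ∀ u v, H u v = (μ * (u - v) - μ * (u ^ 2 - v ^ 2)) /
        ((1 + r * μ * u * (1 - u)) * (1 + r * μ * v * (1 - v))) + k * (u - v))
    (x y : ℕ → ℝ)
    (hx : ∀ t : ℕ, x t = x 0 + (1 / Real.Gamma α) *
      ∑ j ∈ Finset.Icc 1 t,
        Real.Gamma (((t - j : ℕ) : ℝ) + α) / Real.Gamma (((t - j : ℕ) : ℝ) + 1) *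
          (f (x (j - 1)) - x (j - 1)))
    (hy : ∀ t : ℕ, y t = y 0 + (1 / Real.Gamma α) *
      ∑ j ∈ Finset.Icc 1 t,
        Real.Gamma (((t - j : ℕ) : ℝ) + α) / Real.Gamma (((t - j : ℕ) : ℝ) + 1) *
          (f (y (j - 1)) - y (j - 1) + H (x (j - 1)) (y (j - 1))))
    (hdenx : ∀ t : ℕ, 1 + r * μ * x t * (1 - x t) ≠ 0)
    (hdeny : ∀ t : ℕ, 1 + r * μ * y t * (1 - y t) ≠ 0) :
    ∀ t : ℕ, x t - y t = (x 0 - y 0) + (1 / Real.Gamma α) *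
      ∑ j ∈ Finset.Icc 1 t,
        Real.Gamma (((t - j : ℕ) : ℝ) + α) / Real.Gamma (((t - j : ℕ) : ℝ) + 1) *
          (-(1 + k) * (x (j - 1) - y (j - 1))) := by
  intro t
  rw [hx t, hy t]
  have key : ∀ j : ℕ,
      (f (x (j - 1)) - x (j - 1)) - (f (y (j - 1)) - y (j - 1) + H (x (j - 1)) (y (j - 1)))
        = -(1 + k) * (x (j - 1) - y (j - 1)) := by
    intro j
    have hdx := hdenx (j - 1)
    have hdy := hdeny (j - 1)
    rw [hf, hf, hH]
    have e : μ * x (j - 1) * (1 - x (j - 1)) / (1 + r * μ * x (j - 1) * (1 - x (j - 1))) -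
        μ * y (j - 1) * (1 - y (j - 1)) / (1 + r * μ * y (j - 1) * (1 - y (j - 1)))
        = (μ * (x (j - 1) - y (j - 1)) - μ * (x (j - 1) ^ 2 - y (j - 1) ^ 2)) /
          ((1 + r * μ * x (j - 1) * (1 - x (j - 1))) * (1 + r * μ * y (j - 1) * (1 - y (j - 1)))) := by
      rw [div_sub_div _ _ hdx hdy]; congr 1; ring
    linear_combination e
  have : ∀ j ∈ Finset.Icc 1 t,
      Real.Gamma (((t - j : ℕ) : ℝ) + α) / Real.Gamma (((t - j : ℕ) : ℝ) + 1) *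
        (f (x (j - 1)) - x (j - 1)) -
      Real.Gamma (((t - j : ℕ) : ℝ) + α) / Real.Gamma (((t - j : ℕ) : ℝ) + 1) *
        (f (y (j - 1)) - y (j - 1) + H (x (j - 1)) (y (j - 1))) =
      Real.Gamma (((t - j : ℕ) : ℝ) + α) / Real.Gamma (((t - j : ℕ) : ℝ) + 1) *
        (-(1 + k) * (x (j - 1) - y (j - 1))) := by
    intro j _
    rw [← mul_sub, key j]
  rw [← Finset.sum_congr rfl this, Finset.sum_sub_distrib]
  ring
end
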